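/- arXiv:1506.08592 — 2 statements merged into one kernel-verified Lean document; each statement's English description precedes it below -/
import Mathlib

section
/- For every finite simple graph G with at least one isolated vertex, GDS(G) = D^O(G); that is, the worst-case dominating set size of the greedy algorithm on G equals the online domination number of G. -/
namespace OnlinePaper

/-- A deterministic online algorithm in the vertex-arrival model: given the number `n` of
previously revealed vertices and the Boolean adjacency matrix on the `n + 1` revealed
vertices (the newly revealed vertex has index `Fin.last n`), decide whether to accept the
newly revealed vertex.  The algorithm sees only this order-canonical information. -/
def OnlineAlg : Type := (n : ℕ) → (Fin (n + 1) → Fin (n + 1) → Bool) → Bool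

/-- The complement algorithm `ĀLG`: it simulates `A` and accepts exactly the requests
that `A` rejects. -/
def coAlg (A : OnlineAlg) : OnlineAlg := fun n M => !(A n M)

variable {V : Type}

/-- The Boolean adjacency matrix on the first `i + 1` revealed vertices, when the graph `G`
is presented in the order `φ`. -/
noncomputable def revealedMatrix [Fintype V] (G : SimpleGraph V)
    (φ : Fin (Fintype.card V) ≃ V) (i : Fin (Fintype.card V)) :
    Fin (i.val + 1) → Fin (i.val + 1) → Bool :=
  fun a b =>
    @decide (G.Adj (φ ⟨a.val, by have := a.isLt; have := i.isLt; omega⟩)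
        (φ ⟨b.val, by have := b.isLt; have := i.isLt; omega⟩)) (Classical.propDecidable _)

/-- Whether the algorithm `A` accepts the vertex revealed at step `i` when the graph `G` is
presented in the order `φ`. -/
noncomputable def accepts [Fintype V] (A : OnlineAlg) (G : SimpleGraph V)
    (φ : Fin (Fintype.card V) ≃ V) (i : Fin (Fintype.card V)) : Bool :=
  A i.val (revealedMatrix G φ i)

/-- The set of vertices accepted by `A` when `G` is presented in the order `φ`. -/
noncomputable def acceptedSet [Fintype V] (A : OnlineAlg) (G : SimpleGraph V)
    (φ : Fin (Fintype.card V) ≃ V) : Finset V :=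
  Finset.univ.filter (fun v => accepts A G φ (φ.symm v) = true)

/-- `s` is an independent set of `G`. -/
def IsIndep (G : SimpleGraph V) (s : Finset V) : Prop := ∀ a ∈ s, ∀ b ∈ s, ¬ G.Adj a b

/-- `s` is a vertex cover of `G`. -/
def IsVC (G : SimpleGraph V) (s : Finset V) : Prop := ∀ a b : V, G.Adj a b → a ∈ s ∨ b ∈ s

/-- `s` is a dominating set of `G`. -/
def IsDom (G : SimpleGraph V) (s : Finset V) : Prop := ∀ v : V, v ∈ s ∨ ∃ u ∈ s, G.Adj u v

/-- `s` is an inclusion-maximal independent set of `G`. -/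
def IsMaxIndep [DecidableEq V] (G : SimpleGraph V) (s : Finset V) : Prop :=
  IsIndep G s ∧ ∀ v ∉ s, ¬ IsIndep G (insert v s)

/-- For maximization problems: the worst-case (minimum over orderings) number of requests
accepted by `A` on `G`. -/
noncomputable def minScore [Fintype V] (A : OnlineAlg) (G : SimpleGraph V) : ℕ :=
  sInf {m | ∃ φ : Fin (Fintype.card V) ≃ V, (acceptedSet A G φ).card = m}

/-- For minimization problems: the worst-case (maximum over orderings) number of requests
accepted by `A` on `G`. -/
noncomputable def maxScore [Fintype V] (A : OnlineAlg) (G : SimpleGraph V) : ℕ :=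
  sSup {m | ∃ φ : Fin (Fintype.card V) ≃ V, (acceptedSet A G φ).card = m}

/-- The online independence number `I^O(G)`: the largest `m` such that some online
algorithm accepts, on every ordering, an independent set of size at least `m`. -/
noncomputable def onlineIndepNum [Fintype V] (G : SimpleGraph V) : ℕ :=
  sSup {m | ∃ A : OnlineAlg, ∀ φ : Fin (Fintype.card V) ≃ V,
      IsIndep G (acceptedSet A G φ) ∧ m ≤ (acceptedSet A G φ).card}

/-- The online vertex cover number `V^O(G)`: the smallest `m` such that some online
algorithm accepts, on every ordering, a vertex cover of size at most `m`. -/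
noncomputable def onlineVCNum [Fintype V] (G : SimpleGraph V) : ℕ :=
  sInf {m | ∃ A : OnlineAlg, ∀ φ : Fin (Fintype.card V) ≃ V,
      IsVC G (acceptedSet A G φ) ∧ (acceptedSet A G φ).card ≤ m}

/-- The online domination number `D^O(G)`: the smallest `m` such that some online
algorithm accepts, on every ordering, a dominating set of size at most `m`. -/
noncomputable def onlineDomNum [Fintype V] (G : SimpleGraph V) : ℕ :=
  sInf {m | ∃ A : OnlineAlg, ∀ φ : Fin (Fintype.card V) ≃ V,
      IsDom G (acceptedSet A G φ) ∧ (acceptedSet A G φ).card ≤ m}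

/-- The greedy independent set decision: accept the newly revealed vertex iff none of its
previously revealed neighbors has been accepted (by the same greedy rule). -/
def gisAux : (n : ℕ) → (Fin (n + 1) → Fin (n + 1) → Bool) → Bool
  | n, M =>
    decide (∀ j : Fin n,
      gisAux j.val (fun a b => M (Fin.castLE (Nat.succ_le_succ j.isLt.le) a)
        (Fin.castLE (Nat.succ_le_succ j.isLt.le) b)) = true →
      M j.castSucc (Fin.last n) = false)
termination_by n => n
decreasing_by all_goals exact Fin.isLt _

/-- `GIS`, the greedy algorithm for Online Independent Set. -/
def gisAlg : OnlineAlg := fun n M => gisAux n M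

/-- `GDS`, the greedy algorithm for Online Dominating Set (the same algorithm as `GIS`). -/
def gdsAlg : OnlineAlg := gisAlg

/-- The greedy vertex cover decision: accept the newly revealed vertex iff it has a
previously revealed neighbor that was rejected (by the same greedy rule). -/
def gvcAux : (n : ℕ) → (Fin (n + 1) → Fin (n + 1) → Bool) → Bool
  | n, M =>
    decide (∃ j : Fin n,
      gvcAux j.val (fun a b => M (Fin.castLE (Nat.succ_le_succ j.isLt.le) a)
        (Fin.castLE (Nat.succ_le_succ j.isLt.le) b)) = false ∧
      M j.castSucc (Fin.last n) = true)
termination_by n => n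
decreasing_by all_goals exact Fin.isLt _

/-- `GVC`, the greedy algorithm for Online Vertex Cover. -/
def gvcAlg : OnlineAlg := fun n M => gvcAux n M

/-- `IS-STAR`: rejects the first vertex; rejects the second vertex if it is adjacent to the
first; rejects any later vertex having more than one previously revealed neighbor; accepts
every other vertex. -/
def isStarAlg : OnlineAlg := fun n M =>
  let c := (Finset.univ.filter (fun j : Fin n => M j.castSucc (Fin.last n) = true)).card
  if n = 0 then false
  else if n = 1 then decide (c = 0)
  else decide (c ≤ 1)

/-- `Almost-GIS`: identical to `GIS` except that it additionally rejects any revealed vertex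
having at least two previously revealed neighbors. -/
def almostGisAux : (n : ℕ) → (Fin (n + 1) → Fin (n + 1) → Bool) → Bool
  | n, M =>
    (decide (∀ j : Fin n,
      almostGisAux j.val (fun a b => M (Fin.castLE (Nat.succ_le_succ j.isLt.le) a)
        (Fin.castLE (Nat.succ_le_succ j.isLt.le) b)) = true →
      M j.castSucc (Fin.last n) = false)) &&
    decide ((Finset.univ.filter (fun j : Fin n => M j.castSucc (Fin.last n) = true)).card ≤ 1)
termination_by n => n
decreasing_by all_goals exact Fin.isLt _

/-- `Almost-GIS` as an online algorithm. -/
def almostGisAlg : OnlineAlg := fun n M => almostGisAux n M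

/-- The star graph `S_n`: a center `0` adjacent to `n` further vertices, and no other edges. -/
def starGraph (n : ℕ) : SimpleGraph (Fin (n + 1)) where
  Adj a b := a ≠ b ∧ (a = 0 ∨ b = 0)
  symm := ⟨fun _ _ h => ⟨h.1.symm, h.2.symm⟩⟩
  loopless := ⟨fun _ h => h.1 rfl⟩

/-- `v` is an isolated vertex of `G`. -/
def IsIsolated (G : SimpleGraph V) (v : V) : Prop := ∀ u : V, ¬ G.Adj v u

/-- `k(G)`: the number of isolated vertices of `G`. -/
noncomputable def numIsolated [Fintype V] (G : SimpleGraph V) : ℕ :=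
  Finset.card (@Finset.filter V (fun v => IsIsolated G v) (Classical.decPred _) Finset.univ)

/-- `G'`: the subgraph of `G` induced by the non-isolated vertices. -/
def inducedNonIsolated (G : SimpleGraph V) : SimpleGraph {v : V // ¬ IsIsolated G v} :=
  SimpleGraph.comap Subtype.val G

noncomputable instance {α : Type} [Fintype α] {p : α → Prop} : Fintype {v : α // p v} :=
  Fintype.ofFinite _

/-- The independent domination number: the minimum size of an inclusion-maximal independent
set of `G`. -/
noncomputable def indepDomNum [DecidableEq V] (G : SimpleGraph V) : ℕ :=
  sInf {m | ∃ s : Finset V, IsMaxIndep G s ∧ s.card = m}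

/-- The independence number `α(G)`: the maximum size of an independent set of `G`. -/
noncomputable def indepNum (G : SimpleGraph V) : ℕ :=
  sSup {m | ∃ s : Finset V, IsIndep G s ∧ s.card = m}

/-- `G` is a Freckle Graph: `k(G) + s(G') ≥ I^O(G')`. -/
noncomputable def IsFreckle [Fintype V] [DecidableEq V] (G : SimpleGraph V) : Prop :=
  onlineIndepNum (inducedNonIsolated G) ≤ numIsolated G + indepDomNum (inducedNonIsolated G)

/-! A run of `GDS` accepts an independent dominating set `I`. If `G` has an isolated vertex `w`,
any online algorithm that always dominates is forced to accept every vertex revealed while the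
revealed graph is still edgeless: its view is then the same as when `w` arrives at that step,
and `w` can only be dominated by itself. Presenting `I` first thus makes the algorithm accept
all of `I`, so its worst case is at least that of `GDS`. -/

section

variable [Fintype V] {G : SimpleGraph V}

lemma mem_acceptedSet {A : OnlineAlg} {φ : Fin (Fintype.card V) ≃ V} {v : V} :
    v ∈ acceptedSet A G φ ↔ accepts A G φ (φ.symm v) = true := by
  simp [acceptedSet]

lemma accepts_gdsAlg_iff (φ : Fin (Fintype.card V) ≃ V) (i : Fin (Fintype.card V)) :
    accepts gdsAlg G φ i = true ↔
      ∀ j < i, accepts gdsAlg G φ j = true → ¬ G.Adj (φ j) (φ i) := by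
  have hunfold : accepts gdsAlg G φ i =
      decide (∀ j : Fin i.val,
        accepts gdsAlg G φ ⟨j.val, j.isLt.trans i.isLt⟩ = true →
        revealedMatrix G φ i j.castSucc (Fin.last i.val) = false) := by
    show gisAux i.val (revealedMatrix G φ i) = _
    rw [gisAux]
    rfl
  classical
  rw [hunfold, decide_eq_true_iff]
  constructor
  · intro h j hji hacc hadj
    exact of_decide_eq_false (h ⟨j.val, hji⟩ hacc) hadj
  · intro h j hacc
    exact decide_eq_false (h ⟨j.val, j.isLt.trans i.isLt⟩ j.isLt hacc)

lemma isDom_acceptedSet_gdsAlg (φ : Fin (Fintype.card V) ≃ V) :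
    IsDom G (acceptedSet gdsAlg G φ) := by
  intro v
  by_cases h : accepts gdsAlg G φ (φ.symm v) = true
  · exact Or.inl (mem_acceptedSet.mpr h)
  · rw [accepts_gdsAlg_iff] at h
    push Not at h
    obtain ⟨j, -, hacc, hadj⟩ := h
    refine Or.inr ⟨φ j, mem_acceptedSet.mpr (by simpa using hacc), by simpa using hadj⟩

lemma isIndep_acceptedSet_gdsAlg (φ : Fin (Fintype.card V) ≃ V) :
    IsIndep G (acceptedSet gdsAlg G φ) := by
  have key : ∀ a b, a ∈ acceptedSet gdsAlg G φ → b ∈ acceptedSet gdsAlg G φ →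
      φ.symm a < φ.symm b → ¬ G.Adj a b := by
    intro a b ha hb hlt
    simpa using (accepts_gdsAlg_iff φ _).mp (mem_acceptedSet.mp hb) _ hlt (mem_acceptedSet.mp ha)
  intro a ha b hb hadj
  rcases lt_trichotomy (φ.symm a) (φ.symm b) with hlt | heq | hlt
  · exact key a b ha hb hlt hadj
  · exact G.irrefl (by rwa [φ.symm.injective heq] at hadj)
  · exact key b a hb ha hlt hadj.symm

lemma revealedMatrix_eq_false {ψ : Fin (Fintype.card V) ≃ V} {i : Fin (Fintype.card V)}
    (hind : ∀ c ≤ i, ∀ d ≤ i, ¬ G.Adj (ψ c) (ψ d)) :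
    revealedMatrix G ψ i = fun _ _ => false := by
  classical
  funext a b
  exact decide_eq_false (hind _ (Nat.lt_succ_iff.mp a.isLt) _ (Nat.lt_succ_iff.mp b.isLt))

lemma accepts_of_isolated {A : OnlineAlg}
    (hA : ∀ χ : Fin (Fintype.card V) ≃ V, IsDom G (acceptedSet A G χ))
    {w : V} (hw : IsIsolated G w) (ψ : Fin (Fintype.card V) ≃ V) (i : Fin (Fintype.card V))
    (hind : ∀ c ≤ i, ∀ d ≤ i, ¬ G.Adj (ψ c) (ψ d)) :
    accepts A G ψ i = true := by
  classical
  set ψ' : Fin (Fintype.card V) ≃ V := (Equiv.swap i (ψ.symm w)).trans ψ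
  have hψ'w : ψ'.symm w = i := by simp [ψ']
  have hψ'_prefix : ∀ c ≤ i, ψ' c = w ∨ ∃ c' ≤ i, ψ' c = ψ c' := by
    intro c hc
    rcases eq_or_ne c i with rfl | hci
    · simp [ψ']
    rcases eq_or_ne c (ψ.symm w) with rfl | hcw
    · exact Or.inr ⟨i, le_rfl, by simp [ψ']⟩
    · exact Or.inr ⟨c, hc, by simp [ψ', Equiv.swap_apply_of_ne_of_ne hci hcw]⟩
  have hind' : ∀ c ≤ i, ∀ d ≤ i, ¬ G.Adj (ψ' c) (ψ' d) := by
    intro c hc d hd hadj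
    rcases hψ'_prefix c hc with hcw | ⟨c', hc', hc'eq⟩
    · exact hw _ (hcw ▸ hadj)
    rcases hψ'_prefix d hd with hdw | ⟨d', hd', hd'eq⟩
    · exact hw _ (hdw ▸ hadj.symm)
    · exact hind c' hc' d' hd' (hc'eq ▸ hd'eq ▸ hadj)
  have hw_mem : w ∈ acceptedSet A G ψ' :=
    (hA ψ' w).resolve_right fun ⟨u, _, hadj⟩ => hw u hadj.symm
  rw [mem_acceptedSet, hψ'w] at hw_mem
  show A i.val (revealedMatrix G ψ i) = true
  rwa [revealedMatrix_eq_false hind, ← revealedMatrix_eq_false hind']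

lemma exists_equiv_mem_iff_lt (s : Finset V) :
    ∃ ψ : Fin (Fintype.card V) ≃ V, ∀ c, ψ c ∈ s ↔ c.val < s.card := by
  classical
  let e : Fin (s.card + sᶜ.card) ≃ V :=
    finSumFinEquiv.symm.trans ((s.equivFin.symm.sumCongr
      (sᶜ.equivFin.symm.trans (Equiv.subtypeEquivRight fun _ => Finset.mem_compl))).trans
      (Equiv.sumCompl (· ∈ s)))
  have he : ∀ c, e c ∈ s ↔ c.val < s.card := by
    refine Fin.addCases (fun a => ?_) (fun b => ?_)
    · simp [e]
    · simpa [e] using Finset.mem_compl.mp (sᶜ.equivFin.symm b).2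
  refine ⟨(finCongr (Finset.card_add_card_compl s).symm).trans e, fun c => ?_⟩
  simpa using he (finCongr (Finset.card_add_card_compl s).symm c)

lemma exists_subset_acceptedSet {A : OnlineAlg}
    (hA : ∀ χ : Fin (Fintype.card V) ≃ V, IsDom G (acceptedSet A G χ))
    {w : V} (hw : IsIsolated G w) {s : Finset V} (hs : IsIndep G s) :
    ∃ ψ : Fin (Fintype.card V) ≃ V, s ⊆ acceptedSet A G ψ := by
  obtain ⟨ψ, hψ⟩ := exists_equiv_mem_iff_lt s
  refine ⟨ψ, fun v hv => mem_acceptedSet.mpr (accepts_of_isolated hA hw ψ _ ?_)⟩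
  have hv' : (ψ.symm v).val < s.card := (hψ _).mp (by simpa using hv)
  intro c hc d hd
  exact hs _ ((hψ c).mpr (lt_of_le_of_lt hc hv')) _ ((hψ d).mpr (lt_of_le_of_lt hd hv'))

variable (G) (A : OnlineAlg)

lemma bddAbove_card_acceptedSet :
    BddAbove {m | ∃ φ : Fin (Fintype.card V) ≃ V, (acceptedSet A G φ).card = m} :=
  ⟨Fintype.card V, by rintro _ ⟨φ, rfl⟩; exact Finset.card_le_univ _⟩

lemma card_acceptedSet_le_maxScore (φ : Fin (Fintype.card V) ≃ V) :
    (acceptedSet A G φ).card ≤ maxScore A G :=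
  le_csSup (bddAbove_card_acceptedSet G A) ⟨φ, rfl⟩

lemma exists_card_acceptedSet_eq_maxScore :
    ∃ φ : Fin (Fintype.card V) ≃ V, (acceptedSet A G φ).card = maxScore A G :=
  Nat.sSup_mem (s := {m | ∃ φ, (acceptedSet A G φ).card = m})
    ⟨_, (Fintype.equivFin V).symm, rfl⟩ (bddAbove_card_acceptedSet G A)

end

/-- if `G` has at least one isolated vertex then the greedy algorithm
achieves the online domination number: `GDS(G) = D^O(G)` (and `GDS` always produces a
dominating set). -/
theorem statement13 {V : Type} [Fintype V] (G : SimpleGraph V)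
    (hG : ∃ v : V, IsIsolated G v) :
    (∀ φ : Fin (Fintype.card V) ≃ V, IsDom G (acceptedSet gdsAlg G φ)) ∧
      maxScore gdsAlg G = onlineDomNum G := by
  obtain ⟨w, hw⟩ := hG
  have hgds : maxScore gdsAlg G ∈ {m | ∃ A : OnlineAlg, ∀ φ : Fin (Fintype.card V) ≃ V,
      IsDom G (acceptedSet A G φ) ∧ (acceptedSet A G φ).card ≤ m} :=
    ⟨gdsAlg, fun φ => ⟨isDom_acceptedSet_gdsAlg φ, card_acceptedSet_le_maxScore G _ φ⟩⟩
  refine ⟨isDom_acceptedSet_gdsAlg, le_antisymm (le_csInf ⟨_, hgds⟩ ?_) (Nat.sInf_le hgds)⟩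
  rintro m ⟨A, hA⟩
  obtain ⟨φ, hφ⟩ := exists_card_acceptedSet_eq_maxScore G gdsAlg
  obtain ⟨ψ, hsub⟩ := exists_subset_acceptedSet (fun χ => (hA χ).1) hw
    (isIndep_acceptedSet_gdsAlg (G := G) φ)
  calc maxScore gdsAlg G = (acceptedSet gdsAlg G φ).card := hφ.symm
    _ ≤ (acceptedSet A G ψ).card := Finset.card_le_card hsub
    _ ≤ m := (hA ψ).2

end OnlinePaper
end

section
/- For every n ≥ 2, let G_n be the graph with vertices x_1,…,x_n, y_1,…,y_n, z, u_1,…,u_n and edges {x_i,y_i}, {y_i,z}, {z,u_i} for 1 ≤ i ≤ n. Then: (i) for every ordering φ of V(G_n), the number of vertices accepted by Almost-GIS on φ(G_n) is at least the number of vertices accepted by GIS on φ(G_n) (both always produce independent sets); and (ii) there exists an ordering φ of V(G_n) on which Almost-GIS accepts strictly more vertices than GIS. -/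
/-!
Up to the first step at which they disagree, GIS and Almost-GIS make the same decisions, so at
that step GIS accepts a vertex with two earlier neighbours that Almost-GIS rejects. In `G_n` this
vertex is `z`: `x_i` and `u_i` have degree one, and if GIS accepts `y_i` then `x_i` cannot come
earlier, since GIS accepts `x_i` whenever its only neighbour comes later. So GIS's independent set
contains `z` and lies in `{z, x_1, …, x_n}`, while Almost-GIS, having rejected `z`, accepts every
`u_i` and one of `x_i`, `y_i` for each `i`: `n + 1 < 2n`. Revealing the `x_i`, then the `y_i`,
then `z`, then the `u_i` makes GIS accept `z` and Almost-GIS reject it.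
-/

namespace OnlinePaper

variable {V : Type}

/-! ### The graphs of Theorem `agi` -/

/-- The vertex type of the graph `G_n`: `x_i = inl (inl i)`, `y_i = inl (inr (inl i))`,
`u_i = inl (inr (inr i))`, and `z = inr ()`. -/
abbrev GnVertex (n : ℕ) : Type := (Fin n ⊕ Fin n ⊕ Fin n) ⊕ Unit

/-- The (oriented) edges of `G_n`: `x_i — y_i`, `y_i — z` and `z — u_i`. -/
def gnRel (n : ℕ) (a b : GnVertex n) : Prop :=
  (∃ i : Fin n, a = Sum.inl (Sum.inl i) ∧ b = Sum.inl (Sum.inr (Sum.inl i))) ∨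
  (∃ i : Fin n, a = Sum.inl (Sum.inr (Sum.inl i)) ∧ b = Sum.inr ()) ∨
  (∃ i : Fin n, a = Sum.inr () ∧ b = Sum.inl (Sum.inr (Sum.inr i)))

/-- The graph `G_n` with vertices `x_1, …, x_n, y_1, …, y_n, z, u_1, …, u_n` and edges
`{x_i, y_i}`, `{y_i, z}`, `{z, u_i}` for `1 ≤ i ≤ n`. -/
def gnGraph (n : ℕ) : SimpleGraph (GnVertex n) where
  Adj a b := gnRel n a b ∨ gnRel n b a
  symm := ⟨fun _ _ h => h.symm⟩
  loopless := by
    refine ⟨?_⟩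
    intro a h
    rcases h with h | h <;>
      rcases h with ⟨i, h1, h2⟩ | ⟨i, h1, h2⟩ | ⟨i, h1, h2⟩ <;> subst h1 <;> simp_all

section Greedy

variable [Fintype V] {G : SimpleGraph V} {φ : Fin (Fintype.card V) ≃ V}

lemma revealedMatrix_castSucc_last (i : Fin (Fintype.card V)) (j : Fin i.val) :
    revealedMatrix G φ i j.castSucc (Fin.last i.val) = true ↔
      G.Adj (φ (Fin.castLE i.isLt.le j)) (φ i) := by
  simp only [revealedMatrix, decide_eq_true_eq]; rfl

variable (φ) in
lemma forall_castLE_iff_forall_symm_lt (i : Fin (Fintype.card V)) (P : V → Prop) :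
    (∀ j : Fin i.val, P (φ (Fin.castLE i.isLt.le j))) ↔ ∀ u, φ.symm u < i → P u := by
  refine ⟨fun h u hu => ?_, fun h j => h _ (by simp [Fin.lt_def])⟩
  simpa using h ⟨(φ.symm u).val, hu⟩

lemma mem_acceptedSet_iff {A : OnlineAlg} {v : V} :
    v ∈ acceptedSet A G φ ↔ accepts A G φ (φ.symm v) = true := by
  simp [acceptedSet]

lemma accepts_gisAlg_iff {i : Fin (Fintype.card V)} :
    accepts gisAlg G φ i = true ↔
      ∀ j : Fin i.val, accepts gisAlg G φ (Fin.castLE i.isLt.le j) = true →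
        ¬ G.Adj (φ (Fin.castLE i.isLt.le j)) (φ i) := by
  show gisAux _ _ = true ↔ _
  -- the recursive call on the restricted matrix is, definitionally, the decision at step `j`
  rw [gisAux, decide_eq_true_iff]
  exact forall_congr' fun j => imp_congr Iff.rfl
    (by rw [← revealedMatrix_castSucc_last, Bool.not_eq_true])

lemma accepts_almostGisAlg_iff {i : Fin (Fintype.card V)} :
    accepts almostGisAlg G φ i = true ↔
      (∀ j : Fin i.val, accepts almostGisAlg G φ (Fin.castLE i.isLt.le j) = true →
        ¬ G.Adj (φ (Fin.castLE i.isLt.le j)) (φ i)) ∧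
      ∀ j : Fin i.val, G.Adj (φ (Fin.castLE i.isLt.le j)) (φ i) →
        ∀ k : Fin i.val, G.Adj (φ (Fin.castLE i.isLt.le k)) (φ i) →
          φ (Fin.castLE i.isLt.le j) = φ (Fin.castLE i.isLt.le k) := by
  show almostGisAux _ _ = true ↔ _
  rw [almostGisAux, Bool.and_eq_true, decide_eq_true_iff, decide_eq_true_iff,
    Finset.card_le_one]
  refine and_congr (forall_congr' fun j => imp_congr Iff.rfl
    (by rw [← revealedMatrix_castSucc_last, Bool.not_eq_true])) ?_
  simp only [Finset.mem_filter, Finset.mem_univ, true_and, revealedMatrix_castSucc_last,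
    φ.injective.eq_iff, Fin.castLE_inj]

lemma mem_acceptedSet_gisAlg_iff {v : V} :
    v ∈ acceptedSet gisAlg G φ ↔
      ∀ u, φ.symm u < φ.symm v → u ∈ acceptedSet gisAlg G φ → ¬ G.Adj u v := by
  rw [mem_acceptedSet_iff, accepts_gisAlg_iff]
  refine Iff.trans ?_
    (forall_castLE_iff_forall_symm_lt φ _ fun u => u ∈ acceptedSet gisAlg G φ → ¬ G.Adj u v)
  simp [mem_acceptedSet_iff]

lemma mem_acceptedSet_almostGisAlg_iff {v : V} :
    v ∈ acceptedSet almostGisAlg G φ ↔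
      (∀ u, φ.symm u < φ.symm v → u ∈ acceptedSet almostGisAlg G φ → ¬ G.Adj u v) ∧
      ∀ u, φ.symm u < φ.symm v → G.Adj u v →
        ∀ w, φ.symm w < φ.symm v → G.Adj w v → u = w := by
  rw [mem_acceptedSet_iff, accepts_almostGisAlg_iff]
  refine and_congr
    (Iff.trans ?_ (forall_castLE_iff_forall_symm_lt φ _ fun u =>
      u ∈ acceptedSet almostGisAlg G φ → ¬ G.Adj u v))
    (Iff.trans ?_ (forall_castLE_iff_forall_symm_lt φ _ fun u =>
      G.Adj u v → ∀ w, φ.symm w < φ.symm v → G.Adj w v → u = w))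
  · simp [mem_acceptedSet_iff]
  · refine forall_congr' fun j => ?_
    rw [← forall_castLE_iff_forall_symm_lt φ (φ.symm v) fun w => G.Adj w v → _ = w]
    simp

lemma isIndep_of_forall_lt {s : Finset V}
    (h : ∀ v ∈ s, ∀ u, φ.symm u < φ.symm v → u ∈ s → ¬ G.Adj u v) : IsIndep G s := by
  intro a ha b hb hab
  rcases lt_trichotomy (φ.symm a) (φ.symm b) with hlt | heq | hgt
  · exact h b hb a hlt ha hab
  · exact G.loopless.irrefl a (by rwa [φ.symm.injective heq] at hab ⊢)
  · exact h a ha b hgt hb hab.symm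

lemma isIndep_acceptedSet_gisAlg : IsIndep G (acceptedSet gisAlg G φ) :=
  isIndep_of_forall_lt fun _ hv => mem_acceptedSet_gisAlg_iff.mp hv

lemma isIndep_acceptedSet_almostGisAlg : IsIndep G (acceptedSet almostGisAlg G φ) :=
  isIndep_of_forall_lt fun _ hv => (mem_acceptedSet_almostGisAlg_iff.mp hv).1

lemma mem_acceptedSet_gisAlg_of_forall_adj_lt {v : V}
    (h : ∀ u, G.Adj u v → φ.symm v < φ.symm u) : v ∈ acceptedSet gisAlg G φ :=
  mem_acceptedSet_gisAlg_iff.mpr fun u hu _ huv => (h u huv).not_gt hu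

lemma mem_acceptedSet_almostGisAlg_of_forall_adj_eq {v w : V} (h : ∀ u, G.Adj u v → u = w)
    (hw : w ∉ acceptedSet almostGisAlg G φ) : v ∈ acceptedSet almostGisAlg G φ :=
  mem_acceptedSet_almostGisAlg_iff.mpr ⟨fun u _ hu huv => hw (h u huv ▸ hu),
    fun u _ hu w' _ hw' => (h u hu).trans (h w' hw').symm⟩

lemma exists_mem_gisAlg_notMem_almostGisAlg
    (hne : acceptedSet gisAlg G φ ≠ acceptedSet almostGisAlg G φ) :
    ∃ v ∈ acceptedSet gisAlg G φ, v ∉ acceptedSet almostGisAlg G φ ∧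
      ∃ u w, φ.symm u < φ.symm v ∧ G.Adj u v ∧ φ.symm w < φ.symm v ∧ G.Adj w v ∧
        u ≠ w := by
  classical
  set S := acceptedSet gisAlg G φ
  set T := acceptedSet almostGisAlg G φ
  obtain ⟨v, hvD, hmin⟩ :=
    Finset.exists_min_image (Finset.univ.filter fun v => ¬ (v ∈ S ↔ v ∈ T)) φ.symm (by
      by_contra h
      simp only [Finset.not_nonempty_iff_eq_empty, Finset.filter_eq_empty_iff, Finset.mem_univ,
        not_not, true_imp_iff] at h
      exact hne (Finset.ext h))
  have hagree : ∀ u, φ.symm u < φ.symm v → (u ∈ S ↔ u ∈ T) := fun u hu => by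
    by_contra h
    exact (hmin u (by simpa using h)).not_gt hu
  have hfirst : (∀ u, φ.symm u < φ.symm v → u ∈ T → ¬ G.Adj u v) ↔ v ∈ S := by
    rw [mem_acceptedSet_gisAlg_iff]
    exact forall_congr' fun u => imp_congr_right fun hu => imp_congr_left (hagree u hu).symm
  have hvS : v ∈ S ∧ v ∉ T := by
    have hdiff := (Finset.mem_filter.mp hvD).2
    have hTS : v ∈ T → v ∈ S := fun hv => hfirst.mp (mem_acceptedSet_almostGisAlg_iff.mp hv).1
    tauto
  refine ⟨v, hvS.1, hvS.2, ?_⟩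
  by_contra! h
  exact hvS.2 (mem_acceptedSet_almostGisAlg_iff.mpr
    ⟨hfirst.mpr hvS.1, fun u hu huv w hw hwv => h u w hu huv hw hwv⟩)

end Greedy

section Gn

variable {n : ℕ}

def gnX (i : Fin n) : GnVertex n := Sum.inl (Sum.inl i)
def gnY (i : Fin n) : GnVertex n := Sum.inl (Sum.inr (Sum.inl i))
def gnU (i : Fin n) : GnVertex n := Sum.inl (Sum.inr (Sum.inr i))
def gnZ : GnVertex n := Sum.inr ()

lemma gnGraph_adj_gnX {i : Fin n} {v : GnVertex n} :
    (gnGraph n).Adj (gnX i) v ↔ v = gnY i := by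
  rcases v with ((j | j | j) | ⟨⟩) <;> simp [gnGraph, gnRel, gnX, gnY, eq_comm]

lemma gnGraph_adj_gnY {i : Fin n} {v : GnVertex n} :
    (gnGraph n).Adj (gnY i) v ↔ v = gnX i ∨ v = gnZ := by
  rcases v with ((j | j | j) | ⟨⟩) <;> simp [gnGraph, gnRel, gnX, gnY, gnZ, eq_comm]

lemma gnGraph_adj_gnU {i : Fin n} {v : GnVertex n} :
    (gnGraph n).Adj (gnU i) v ↔ v = gnZ := by
  rcases v with ((j | j | j) | ⟨⟩) <;> simp [gnGraph, gnRel, gnU, gnZ]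

lemma gnGraph_adj_gnZ {v : GnVertex n} :
    (gnGraph n).Adj gnZ v ↔ (∃ i, v = gnY i) ∨ ∃ i, v = gnU i := by
  rcases v with ((j | j | j) | ⟨⟩) <;> simp [gnGraph, gnRel, gnY, gnU, gnZ]

lemma gnVertex_cases (v : GnVertex n) :
    (∃ i, v = gnX i) ∨ (∃ i, v = gnY i) ∨ (∃ i, v = gnU i) ∨ v = gnZ := by
  rcases v with ((i | i | i) | ⟨⟩)
  exacts [Or.inl ⟨i, rfl⟩, Or.inr (Or.inl ⟨i, rfl⟩), Or.inr (Or.inr (Or.inl ⟨i, rfl⟩)),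
    Or.inr (Or.inr (Or.inr rfl))]

lemma card_le_of_isIndep_of_gnZ_mem {s : Finset (GnVertex n)} (hs : IsIndep (gnGraph n) s)
    (hz : gnZ ∈ s) : s.card ≤ n + 1 := by
  classical
  have hsub : s ⊆ insert gnZ (Finset.univ.image gnX) := by
    intro v hv
    obtain ⟨i, rfl⟩ | ⟨i, rfl⟩ | ⟨i, rfl⟩ | rfl := gnVertex_cases v
    · exact Finset.mem_insert_of_mem (Finset.mem_image_of_mem _ (Finset.mem_univ i))
    · exact absurd (gnGraph_adj_gnZ.mpr (Or.inl ⟨i, rfl⟩)) (hs _ hz _ hv)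
    · exact absurd (gnGraph_adj_gnZ.mpr (Or.inr ⟨i, rfl⟩)) (hs _ hz _ hv)
    · exact Finset.mem_insert_self _ _
  calc s.card ≤ (insert gnZ (Finset.univ.image gnX)).card := Finset.card_le_card hsub
    _ ≤ (Finset.univ.image (gnX (n := n))).card + 1 := Finset.card_insert_le _ _
    _ ≤ n + 1 := by
      grw [Finset.card_image_le, Finset.card_univ, Fintype.card_fin]

lemma two_mul_le_card_of_gnU_mem {s : Finset (GnVertex n)} (hu : ∀ i, gnU i ∈ s)
    (hxy : ∀ i, gnX i ∈ s ∨ gnY i ∈ s) : 2 * n ≤ s.card := by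
  classical
  let f : Fin n ⊕ Fin n → GnVertex n :=
    Sum.elim gnU fun i => if gnY i ∈ s then gnY i else gnX i
  calc 2 * n = (Finset.univ : Finset (Fin n ⊕ Fin n)).card := by simp [two_mul]
    _ ≤ s.card := Finset.card_le_card_of_injOn f ?_ ?_
  · rintro (i | i) -
    · exact hu i
    · by_cases h : gnY i ∈ s <;> simp only [f, Sum.elim_inr, h, if_true, if_false]
      exacts [h, (hxy i).resolve_right h]
  · rintro (i | i) - (j | j) - hij <;> simp only [f, Sum.elim_inl, Sum.elim_inr] at hij <;>
      (try split_ifs at hij) <;> simp_all [gnX, gnY, gnU]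

variable {φ : Fin (Fintype.card (GnVertex n)) ≃ GnVertex n}

lemma gnX_mem_acceptedSet_gisAlg {i : Fin n} (h : φ.symm (gnX i) < φ.symm (gnY i)) :
    gnX i ∈ acceptedSet gisAlg (gnGraph n) φ :=
  mem_acceptedSet_gisAlg_of_forall_adj_lt fun _ hu => by rwa [gnGraph_adj_gnX.mp hu.symm]

lemma eq_gnZ_of_mem_acceptedSet_gisAlg {u v w : GnVertex n}
    (hv : v ∈ acceptedSet gisAlg (gnGraph n) φ) (hu : φ.symm u < φ.symm v)
    (huv : (gnGraph n).Adj u v) (hw : φ.symm w < φ.symm v) (hwv : (gnGraph n).Adj w v)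
    (huw : u ≠ w) : v = gnZ := by
  rw [(gnGraph n).adj_comm] at huv hwv
  obtain ⟨i, rfl⟩ | ⟨i, rfl⟩ | ⟨i, rfl⟩ | rfl := gnVertex_cases v
  · exact absurd ((gnGraph_adj_gnX.mp huv).trans (gnGraph_adj_gnX.mp hwv).symm) huw
  · have hx : φ.symm (gnX i) < φ.symm (gnY i) := by
      rcases gnGraph_adj_gnY.mp huv with rfl | rfl
      · exact hu
      rcases gnGraph_adj_gnY.mp hwv with rfl | rfl
      · exact hw
      · exact absurd rfl huw
    exact absurd (gnGraph_adj_gnX.mpr rfl)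
      (isIndep_acceptedSet_gisAlg _ (gnX_mem_acceptedSet_gisAlg hx) _ hv)
  · exact absurd ((gnGraph_adj_gnU.mp huv).trans (gnGraph_adj_gnU.mp hwv).symm) huw
  · rfl

lemma two_mul_le_card_acceptedSet_almostGisAlg
    (hz : gnZ ∉ acceptedSet almostGisAlg (gnGraph n) φ) :
    2 * n ≤ (acceptedSet almostGisAlg (gnGraph n) φ).card :=
  two_mul_le_card_of_gnU_mem
    (fun _ => mem_acceptedSet_almostGisAlg_of_forall_adj_eq
      (fun _ hu => gnGraph_adj_gnU.mp hu.symm) hz)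
    (fun _ => or_iff_not_imp_right.mpr (mem_acceptedSet_almostGisAlg_of_forall_adj_eq
      (fun _ hu => gnGraph_adj_gnX.mp hu.symm)))

lemma card_acceptedSet_gisAlg_lt_almostGisAlg_of_gnZ (hn : 2 ≤ n)
    (hG : gnZ ∈ acceptedSet gisAlg (gnGraph n) φ)
    (hA : gnZ ∉ acceptedSet almostGisAlg (gnGraph n) φ) :
    (acceptedSet gisAlg (gnGraph n) φ).card < (acceptedSet almostGisAlg (gnGraph n) φ).card := by
  have hG' := card_le_of_isIndep_of_gnZ_mem isIndep_acceptedSet_gisAlg hG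
  have hA' := two_mul_le_card_acceptedSet_almostGisAlg hA
  omega

lemma card_acceptedSet_gisAlg_le_almostGisAlg (hn : 2 ≤ n) :
    (acceptedSet gisAlg (gnGraph n) φ).card ≤
      (acceptedSet almostGisAlg (gnGraph n) φ).card := by
  by_cases h : acceptedSet gisAlg (gnGraph n) φ = acceptedSet almostGisAlg (gnGraph n) φ
  · rw [h]
  obtain ⟨v, hvG, hvA, u, w, hu, huv, hw, hwv, huw⟩ := exists_mem_gisAlg_notMem_almostGisAlg h
  obtain rfl := eq_gnZ_of_mem_acceptedSet_gisAlg hvG hu huv hw hwv huw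
  exact (card_acceptedSet_gisAlg_lt_almostGisAlg_of_gnZ hn hvG hvA).le

variable (n) in
def gnRank : GnVertex n → ℕ
  | Sum.inl (Sum.inl i) => i
  | Sum.inl (Sum.inr (Sum.inl i)) => n + i
  | Sum.inr () => 2 * n
  | Sum.inl (Sum.inr (Sum.inr i)) => 2 * n + 1 + i

lemma gnRank_lt_card (v : GnVertex n) : gnRank n v < Fintype.card (GnVertex n) := by
  rcases v with ((i | i | i) | ⟨⟩) <;> simp [gnRank] <;> omega

lemma gnRank_injective : Function.Injective (gnRank n) := by
  rintro ((i | i | i) | ⟨⟩) ((j | j | j) | ⟨⟩) h <;> simp [gnRank, Fin.ext_iff] at h ⊢ <;>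
    omega

variable (n) in
noncomputable def gnOrder : Fin (Fintype.card (GnVertex n)) ≃ GnVertex n :=
  (Equiv.ofBijective (fun v => ⟨gnRank n v, gnRank_lt_card v⟩)
    ((Fintype.bijective_iff_injective_and_card _).mpr
      ⟨fun _ _ h => gnRank_injective (Fin.val_eq_of_eq h), by simp⟩)).symm

lemma gnOrder_symm_lt_iff {u v : GnVertex n} :
    (gnOrder n).symm u < (gnOrder n).symm v ↔ gnRank n u < gnRank n v := by
  simp [gnOrder, Fin.lt_def]

lemma gnZ_mem_acceptedSet_gisAlg_gnOrder :
    gnZ ∈ acceptedSet gisAlg (gnGraph n) (gnOrder n) := by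
  refine mem_acceptedSet_gisAlg_iff.mpr fun u hu hmem huz => ?_
  rw [gnOrder_symm_lt_iff] at hu
  obtain ⟨i, rfl⟩ | ⟨i, rfl⟩ := gnGraph_adj_gnZ.mp huz.symm
  · have hx := gnX_mem_acceptedSet_gisAlg (i := i) (φ := gnOrder n)
      (gnOrder_symm_lt_iff.mpr (by simpa [gnRank, gnX, gnY] using i.pos))
    exact isIndep_acceptedSet_gisAlg _ hx _ hmem (gnGraph_adj_gnX.mpr rfl)
  · simp [gnRank, gnU, gnZ] at hu; omega

lemma gnZ_notMem_acceptedSet_almostGisAlg_gnOrder (hn : 2 ≤ n) :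
    gnZ ∉ acceptedSet almostGisAlg (gnGraph n) (gnOrder n) := by
  intro h
  have hy : ∀ i : Fin n, (gnOrder n).symm (gnY i) < (gnOrder n).symm gnZ := fun i =>
    gnOrder_symm_lt_iff.mpr (by simp [gnRank, gnY, gnZ]; omega)
  have := (mem_acceptedSet_almostGisAlg_iff.mp h).2 (gnY ⟨0, by omega⟩) (hy _)
    (gnGraph_adj_gnY.mpr (Or.inr rfl)) (gnY ⟨1, by omega⟩) (hy _)
    (gnGraph_adj_gnY.mpr (Or.inr rfl))
  simp [gnY] at this

end Gn

/-- for `n ≥ 2`, on the graph `G_n` both `GIS` and `Almost-GIS` always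
produce independent sets, on every ordering `Almost-GIS` accepts at least as many vertices
as `GIS`, and on some ordering `Almost-GIS` accepts strictly more vertices than `GIS`. -/
theorem statement17 (n : ℕ) (hn : 2 ≤ n) :
    (∀ φ : Fin (Fintype.card (GnVertex n)) ≃ GnVertex n,
        IsIndep (gnGraph n) (acceptedSet gisAlg (gnGraph n) φ) ∧
        IsIndep (gnGraph n) (acceptedSet almostGisAlg (gnGraph n) φ) ∧
        (acceptedSet gisAlg (gnGraph n) φ).card ≤
          (acceptedSet almostGisAlg (gnGraph n) φ).card) ∧
      (∃ φ : Fin (Fintype.card (GnVertex n)) ≃ GnVertex n,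
        (acceptedSet gisAlg (gnGraph n) φ).card <
          (acceptedSet almostGisAlg (gnGraph n) φ).card) := by
  refine ⟨fun φ => ⟨isIndep_acceptedSet_gisAlg, isIndep_acceptedSet_almostGisAlg,
    card_acceptedSet_gisAlg_le_almostGisAlg hn⟩, gnOrder n, ?_⟩
  exact card_acceptedSet_gisAlg_lt_almostGisAlg_of_gnZ hn gnZ_mem_acceptedSet_gisAlg_gnOrder
    (gnZ_notMem_acceptedSet_almostGisAlg_gnOrder hn)

end OnlinePaper
end
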